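/- Let Q(ξ) = ξ₁₁² + ξ₂₂² + ξ₃₃² − 2ξ₁₁ξ₂₂ − 2ξ₂₂ξ₃₃ − 2ξ₃₃ξ₁₁ + ξ₁₂² + ξ₂₃² + ξ₃₁². For every pair of nonzero vectors a, b ∈ ℝ³ and every t > 0, the quadratic form ξ ↦ Q(ξ) − t (aᵀ ξ b)² is not quasiconvex: there exist x, y ∈ ℝ³ with Q(x ⊗ y) − t ((a·x)(b·y))² < 0. That is, Q is extremal in the sense that one cannot subtract a positive multiple of a rank-one quadratic form from Q while preserving quasiconvexity. -/

import Mathlib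

/-!
`Q` vanishes on the rank-one matrices `e_{j+1} ⊗ e_j` and on `s ⊗ s` for every sign vector `s`
(indeed `Q (x ⊗ x) = ½ ∑_{i<j} (x_i² - x_j²)²`). If `Q - t (aᵀ ξ b)²` were nonnegative on rank-one
matrices, `(a ⬝ᵥ x) (b ⬝ᵥ y)` would vanish on all of them. The first family gives
`a_{j+1} b_j = 0` for all `j`, so one of `a`, `b` is supported on a single coordinate; the second
then makes the other one orthogonal to every sign vector, hence zero.
-/

/-- The tensor (outer) product of two vectors in ℝ³, as a 3×3 matrix. -/
def outer (x y : Fin 3 → ℝ) : Matrix (Fin 3) (Fin 3) ℝ :=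
  fun i j => x i * y j

/-- The quadratic form
`Q(ξ) = ξ₁₁² + ξ₂₂² + ξ₃₃² − 2ξ₁₁ξ₂₂ − 2ξ₂₂ξ₃₃ − 2ξ₃₃ξ₁₁ + ξ₁₂² + ξ₂₃² + ξ₃₁²`. -/
def Q (ξ : Matrix (Fin 3) (Fin 3) ℝ) : ℝ :=
  ξ 0 0 ^ 2 + ξ 1 1 ^ 2 + ξ 2 2 ^ 2
    - 2 * ξ 0 0 * ξ 1 1 - 2 * ξ 1 1 * ξ 2 2 - 2 * ξ 2 2 * ξ 0 0
    + ξ 0 1 ^ 2 + ξ 1 2 ^ 2 + ξ 2 0 ^ 2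

theorem Q_outer_single_succ (j : Fin 3) :
    Q (outer (Pi.single (j + 1) 1) (Pi.single j 1)) = 0 := by
  fin_cases j <;> simp [Q, outer]

theorem Q_outer_self_eq_zero {s : Fin 3 → ℝ} (hs : ∀ i, s i ^ 2 = 1) : Q (outer s s) = 0 := by
  simp only [Q, outer, ← sq, mul_pow, hs]
  norm_num

theorem eq_zero_of_forall_dotProduct_sign_eq_zero {ι : Type*} [Fintype ι] [DecidableEq ι]
    {w : ι → ℝ} (h : ∀ s : ι → ℝ, (∀ i, s i ^ 2 = 1) → w ⬝ᵥ s = 0) : w = 0 := by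
  funext i
  -- flipping the sign of the `i`-th coordinate of `1` changes `w ⬝ᵥ s` by `2 * w i`
  have hflip : ∀ j, (1 - Pi.single i 2 : ι → ℝ) j ^ 2 = 1 := by
    intro j
    by_cases hj : j = i
    · subst hj; norm_num
    · simp [hj]
  have h₁ := h 1 (by simp)
  have h₂ := h _ hflip
  rw [dotProduct_sub, dotProduct_single, h₁] at h₂
  simpa using h₂

theorem eq_zero_or_eq_zero_of_forall_sign {ι : Type*} [Fintype ι] [DecidableEq ι]
    {v w : ι → ℝ} {k : ι} (hv : ∀ i ≠ k, v i = 0)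
    (h : ∀ s : ι → ℝ, (∀ i, s i ^ 2 = 1) → (v ⬝ᵥ s) * (w ⬝ᵥ s) = 0) : v = 0 ∨ w = 0 := by
  by_cases hk : v k = 0
  · left
    funext i
    by_cases hi : i = k
    · rw [hi, hk]; rfl
    · exact hv i hi
  right
  refine eq_zero_of_forall_dotProduct_sign_eq_zero fun s hs => ?_
  have hsk : s k ≠ 0 := by
    intro h0; simpa [h0] using hs k
  have hvs : v ⬝ᵥ s = v k * s k :=
    Finset.sum_eq_single k (fun i _ hi => by rw [hv i hi, zero_mul]) (by simp)
  simpa [hvs, hk, hsk] using h s hs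

theorem exists_eq_zero_off_of_forall_succ (a b : Fin 3 → ℝ)
    (h : ∀ j : Fin 3, a (j + 1) = 0 ∨ b j = 0) :
    ∃ k, (∀ i ≠ k, a i = 0) ∨ (∀ i ≠ k, b i = 0) := by
  simp [Fin.exists_fin_succ, Fin.forall_fin_succ] at h ⊢
  tauto

/-- one cannot subtract any positive multiple of a rank-one quadratic form
`ξ ↦ (aᵀ ξ b)²` (with `a, b ≠ 0`) from `Q` while preserving quasiconvexity: the difference
takes a negative value on some rank-one matrix `x ⊗ y`. -/
theorem Q_extremal_def1 (a b : Fin 3 → ℝ) (ha : a ≠ 0) (hb : b ≠ 0) (t : ℝ) (ht : 0 < t) :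
    ∃ x y : Fin 3 → ℝ,
      Q (outer x y) - t * ((∑ i : Fin 3, a i * x i) * (∑ i : Fin 3, b i * y i)) ^ 2 < 0 := by
  by_contra! hQ
  have hnull : ∀ x y, Q (outer x y) = 0 → (a ⬝ᵥ x) * (b ⬝ᵥ y) = 0 := fun x y h0 => by
    have h := hQ x y
    rw [h0, zero_sub, neg_nonneg] at h
    exact pow_eq_zero_iff two_ne_zero |>.mp
      ((nonpos_of_mul_nonpos_right h ht).antisymm (sq_nonneg _))
  have hsucc (j : Fin 3) : a (j + 1) = 0 ∨ b j = 0 := by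
    simpa using hnull _ _ (Q_outer_single_succ j)
  have hsign (s : Fin 3 → ℝ) (hs : ∀ i, s i ^ 2 = 1) : (a ⬝ᵥ s) * (b ⬝ᵥ s) = 0 :=
    hnull s s (Q_outer_self_eq_zero hs)
  obtain ⟨k, hk | hk⟩ := exists_eq_zero_off_of_forall_succ a b hsucc
  · exact (eq_zero_or_eq_zero_of_forall_sign hk hsign).elim ha hb
  · refine (eq_zero_or_eq_zero_of_forall_sign hk fun s hs => ?_).elim hb ha
    rw [mul_comm]; exact hsign s hs
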